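/- arXiv:1303.0593 — 4 statements merged into one kernel-verified Lean document; each statement's English description precedes it below -/
import Mathlib

section
/- Let 0<s<1, n ≥ 1, m ≥ n, N = m+n, and let p₁ = (1/√2)(e₁^{(m)}, e₁^{(n)}) where e₁ denotes the first standard basis vector. Let E₁ = { (y,z) ∈ ℝ^m × ℝ^n : |z| > |y| }. Then for every δ > 0, the integral over ℝ^N \ B(p₁, δ) of (χ_{E₁}(x) − χ_{E₁^c}(x))/|x − p₁|^{N+s} dx is less than or equal to 0. -/
/-!
Exchanging the coordinates `y_j` and `z_j` for `j < n` is a linear isometry `T` of `ℝ^N` that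
fixes `p₁`, and since `n ≤ m` it maps `E₁` into `E₁ᶜ`: the `z`-part of `T x` is part of the
`y`-part of `x`, and vice versa. The kernel `|x - p₁|^{-(N+s)}` is `T`-invariant and integrable
away from `p₁` because `N + s > N`, so changing variables by `T` shows that its integral over
`E₁` is at most its integral over `E₁ᶜ`.
-/

open MeasureTheory Set Module

theorem integrableOn_inv_dist_rpow_of_le_dist {V : Type*} [NormedAddCommGroup V]
    [NormedSpace ℝ V] [FiniteDimensional ℝ V] [MeasurableSpace V] [BorelSpace V]
    {μ : Measure V} [μ.IsAddHaarMeasure] {r δ : ℝ}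
    (hr : (finrank ℝ V : ℝ) < r) (hδ : 0 < δ) (p : V) :
    IntegrableOn (fun x => (dist x p ^ r)⁻¹) {x | δ ≤ dist x p} μ := by
  have hr0 : 0 < r := (Nat.cast_nonneg _).trans_lt hr
  have hmajorant := ((integrable_one_add_norm (μ := μ) hr).comp_sub_right p).const_mul
    ((1 + δ⁻¹) ^ r)
  refine hmajorant.integrableOn.mono'
    (by fun_prop : Measurable fun x => (dist x p ^ r)⁻¹).aestronglyMeasurable ?_
  filter_upwards [ae_restrict_mem (measurableSet_le measurable_const (by fun_prop))] with x hx
  have hd : 0 < dist x p := hδ.trans_le hx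
  have hle : 1 + dist x p ≤ (1 + δ⁻¹) * dist x p := by
    have : 1 ≤ δ⁻¹ * dist x p := by rw [inv_mul_eq_div, one_le_div hδ]; exact hx
    linarith
  rw [Real.norm_of_nonneg (by positivity), ← dist_eq_norm, Real.rpow_neg (by positivity),
    ← div_eq_mul_inv, le_div_iff₀ (by positivity), inv_mul_le_iff₀ (by positivity),
    ← Real.mul_rpow hd.le (by positivity), mul_comm (dist x p)]
  gcongr

theorem setIntegral_inter_le_of_measurePreserving {α : Type*} [MeasurableSpace α]
    {μ : Measure α} {T : α → α} (hT : MeasurePreserving T μ μ) (hTe : MeasurableEmbedding T)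
    {K : α → ℝ} {Ω A B : Set α} (hΩ : T ⁻¹' Ω = Ω) (hKT : ∀ x, K (T x) = K x)
    (hK : IntegrableOn K Ω μ) (hK0 : ∀ᵐ x ∂μ.restrict Ω, 0 ≤ K x) (hAB : T ⁻¹' A ⊆ B) :
    ∫ x in Ω ∩ A, K x ∂μ ≤ ∫ x in Ω ∩ B, K x ∂μ :=
  calc ∫ x in Ω ∩ A, K x ∂μ = ∫ x in T ⁻¹' (Ω ∩ A), K (T x) ∂μ :=
        (hT.setIntegral_preimage_emb hTe K _).symm
    _ = ∫ x in Ω ∩ T ⁻¹' A, K x ∂μ := by simp only [preimage_inter, hΩ, hKT]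
    _ ≤ ∫ x in Ω ∩ B, K x ∂μ :=
        setIntegral_mono_set (hK.mono_set inter_subset_left)
          (ae_restrict_of_ae_restrict_of_subset inter_subset_left hK0)
          (Filter.Eventually.of_forall (inter_subset_inter_right Ω hAB))

theorem setIntegral_indicator_sub_indicator_compl_div_dist_rpow_nonpos {F : Type*}
    [NormedAddCommGroup F] [InnerProductSpace ℝ F] [FiniteDimensional ℝ F] [MeasurableSpace F]
    [BorelSpace F] (T : F ≃ₗᵢ[ℝ] F) {p : F} (hTp : T p = p) {S : Set F} (hS : MeasurableSet S)
    (hTS : T ⁻¹' S ⊆ Sᶜ) {r δ : ℝ} (hr : (finrank ℝ F : ℝ) < r) (hδ : 0 < δ) :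
    (∫ x in {x : F | δ ≤ dist x p},
        (S.indicator (fun _ => (1:ℝ)) x - Sᶜ.indicator (fun _ => (1:ℝ)) x)
          / dist x p ^ r) ≤ 0 := by
  set K : F → ℝ := fun x => (dist x p ^ r)⁻¹
  have hK : IntegrableOn K {x | δ ≤ dist x p} := integrableOn_inv_dist_rpow_of_le_dist hr hδ p
  have hdist : ∀ x, dist (T x) p = dist x p := fun x => by simpa [hTp] using T.dist_map x p
  calc (∫ x in {x : F | δ ≤ dist x p},
        (S.indicator (fun _ => (1:ℝ)) x - Sᶜ.indicator (fun _ => (1:ℝ)) x) / dist x p ^ r)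
      = ∫ x in {x : F | δ ≤ dist x p}, (S.indicator K x - Sᶜ.indicator K x) := by
        congr 1; funext x
        by_cases hx : x ∈ S <;> simp [K, hx, div_eq_mul_inv]
    _ = (∫ x in {x : F | δ ≤ dist x p} ∩ S, K x) - ∫ x in {x : F | δ ≤ dist x p} ∩ Sᶜ, K x := by
        rw [integral_sub (hK.indicator hS) (hK.indicator hS.compl), setIntegral_indicator hS,
          setIntegral_indicator hS.compl]
    _ ≤ 0 := sub_nonpos.2 <|
        setIntegral_inter_le_of_measurePreserving T.measurePreserving
          T.toHomeomorph.measurableEmbedding (by ext; simp [hdist]) (by simp [K, hdist]) hK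
          (ae_of_all _ fun x => by positivity) hTS

namespace Fin

variable {m n : ℕ}

def sumSwapHead (hmn : n ≤ m) : Fin m ⊕ Fin n → Fin m ⊕ Fin n
  | .inl j => if h : (j : ℕ) < n then .inr ⟨j, h⟩ else .inl j
  | .inr k => .inl (castLE hmn k)

theorem sumSwapHead_involutive (hmn : n ≤ m) : Function.Involutive (sumSwapHead hmn) := by
  rintro (j | k)
  · by_cases h : (j : ℕ) < n <;> simp [sumSwapHead, h]
  · simp [sumSwapHead, k.isLt]

def swapHead (hmn : n ≤ m) : Equiv.Perm (Fin (m + n)) :=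
  finSumFinEquiv.permCongr (sumSwapHead_involutive hmn).toPerm

theorem swapHead_involutive (hmn : n ≤ m) : Function.Involutive (swapHead hmn) := fun i => by
  simp [swapHead, sumSwapHead_involutive hmn _]

@[simp]
theorem swapHead_symm (hmn : n ≤ m) : (swapHead hmn).symm = swapHead hmn :=
  Equiv.ext fun i => (swapHead hmn).symm_apply_eq.2 (swapHead_involutive hmn i).symm

@[simp]
theorem swapHead_natAdd (hmn : n ≤ m) (k : Fin n) :
    swapHead hmn (natAdd m k) = castAdd n (castLE hmn k) := by
  simp [swapHead, sumSwapHead]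

@[simp]
theorem swapHead_castAdd_castLE (hmn : n ≤ m) (k : Fin n) :
    swapHead hmn (castAdd n (castLE hmn k)) = natAdd m k := by
  rw [← swapHead_natAdd, swapHead_involutive]

theorem sum_sq_natAdd_le_sum_sq_castAdd_swapHead (hmn : n ≤ m) (x : Fin (m + n) → ℝ) :
    ∑ k : Fin n, x (natAdd m k) ^ 2 ≤ ∑ j : Fin m, x (swapHead hmn (castAdd n j)) ^ 2 := by
  calc ∑ k : Fin n, x (natAdd m k) ^ 2
      = ∑ j ∈ Finset.univ.map (castLEEmb hmn), x (swapHead hmn (castAdd n j)) ^ 2 := by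
        simp [Finset.sum_map]
    _ ≤ ∑ j : Fin m, x (swapHead hmn (castAdd n j)) ^ 2 :=
        Finset.sum_le_sum_of_subset_of_nonneg (Finset.subset_univ _) fun _ _ _ => sq_nonneg _

theorem sum_sq_swapHead_natAdd_le_sum_sq_castAdd (hmn : n ≤ m) (x : Fin (m + n) → ℝ) :
    ∑ k : Fin n, x (swapHead hmn (natAdd m k)) ^ 2 ≤ ∑ j : Fin m, x (castAdd n j) ^ 2 := by
  simpa only [Function.comp_apply, swapHead_involutive hmn _] using
    sum_sq_natAdd_le_sum_sq_castAdd_swapHead hmn (x ∘ swapHead hmn)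

end Fin

theorem stmt2_general (m n : ℕ) (hn : 1 ≤ n) (hmn : n ≤ m) (s : ℝ) (hs0 : 0 < s)
    (E : Set (EuclideanSpace ℝ (Fin (m + n))))
    (hE : E = {x | Real.sqrt (∑ j : Fin m, x (Fin.castAdd n j) ^ 2) <
                   Real.sqrt (∑ j : Fin n, x (Fin.natAdd m j) ^ 2)})
    (p : EuclideanSpace ℝ (Fin (m + n)))
    (hp : ∀ i : Fin (m + n),
      p i = if i = Fin.castAdd n ⟨0, lt_of_lt_of_le hn hmn⟩ ∨ i = Fin.natAdd m ⟨0, hn⟩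
        then 1 / Real.sqrt 2 else 0)
    (δ : ℝ) (hδ : 0 < δ) :
    (∫ x in {x : EuclideanSpace ℝ (Fin (m + n)) | δ ≤ dist x p},
        (E.indicator (fun _ => (1:ℝ)) x - Eᶜ.indicator (fun _ => (1:ℝ)) x)
          / dist x p ^ ((m + n : ℝ) + s)) ≤ 0 := by
  set T := LinearIsometryEquiv.piLpCongrLeft 2 ℝ ℝ (Fin.swapHead hmn)
  have hT : ∀ x i, T x i = x (Fin.swapHead hmn i) := fun x i => by simp [T]
  have hTp : T p = p := by
    ext i
    have h0 : Fin.swapHead hmn (Fin.natAdd m ⟨0, hn⟩) =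
        Fin.castAdd n ⟨0, lt_of_lt_of_le hn hmn⟩ := Fin.swapHead_natAdd hmn ⟨0, hn⟩
    have h1 : Fin.swapHead hmn (Fin.castAdd n ⟨0, lt_of_lt_of_le hn hmn⟩) =
        Fin.natAdd m ⟨0, hn⟩ := Fin.swapHead_castAdd_castLE hmn ⟨0, hn⟩
    simp only [hT, hp, ← Equiv.eq_symm_apply, Fin.swapHead_symm, h0, h1, or_comm]
  have hTE : T ⁻¹' E ⊆ Eᶜ := by
    intro x hTx hx
    simp only [hE, mem_preimage, mem_ofPred_eq, hT,
      Real.sqrt_lt_sqrt_iff (Finset.sum_nonneg fun _ _ => sq_nonneg _)] at hTx hx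
    linarith [Fin.sum_sq_natAdd_le_sum_sq_castAdd_swapHead hmn x,
      Fin.sum_sq_swapHead_natAdd_le_sum_sq_castAdd hmn x]
  have hEm : MeasurableSet E := hE ▸ (isOpen_lt (by fun_prop) (by fun_prop)).measurableSet
  refine setIntegral_indicator_sub_indicator_compl_div_dist_rpow_nonpos T hTp hEm hTE ?_ hδ
  rw [finrank_euclideanSpace_fin]
  push_cast
  linarith

/-- For the symmetric cone `E₁ = {|z| > |y|}` in `ℝ^m × ℝ^n` with `n ≤ m`, the truncated
    nonlocal mean curvature integral at the point `p₁ = (e₁/√2, e₁/√2)` is nonpositive. -/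
theorem stmt2 (m n : ℕ) (hn : 1 ≤ n) (hmn : n ≤ m) (s : ℝ) (hs0 : 0 < s) (hs1 : s < 1)
    (E : Set (EuclideanSpace ℝ (Fin (m + n))))
    (hE : E = {x | Real.sqrt (∑ j : Fin m, x (Fin.castAdd n j) ^ 2) <
                   Real.sqrt (∑ j : Fin n, x (Fin.natAdd m j) ^ 2)})
    (p : EuclideanSpace ℝ (Fin (m + n)))
    (hp : ∀ i : Fin (m + n),
      p i = if i = Fin.castAdd n ⟨0, lt_of_lt_of_le hn hmn⟩ ∨ i = Fin.natAdd m ⟨0, hn⟩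
        then 1 / Real.sqrt 2 else 0)
    (δ : ℝ) (hδ : 0 < δ) :
    (∫ x in {x : EuclideanSpace ℝ (Fin (m + n)) | δ ≤ dist x p},
        (E.indicator (fun _ => (1:ℝ)) x - Eᶜ.indicator (fun _ => (1:ℝ)) x)
          / dist x p ^ ((m + n : ℝ) + s)) ≤ 0 :=
  stmt2_general m n hn hmn s hs0 E hE p hp δ hδ
end

section
/- Let 0 < β₂ < β₁ < π/2 and set θ = β₁ − β₂. Then for all t with 1 < t ≤ 1/sin(β₁), one has arccos(sin(β₁)·t) + θ < arccos(sin(β₂)·t). -/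
/-!
Put `B = arccos (sin β₁ * t)`. Since `t > 1`, `sin B = √(1 - sin² β₁ t²)` is strictly less than
`√(t² - sin² β₁ t²) = cos β₁ * t`, so expanding `cos (B + θ)` gives
`cos (B + θ) > (sin β₁ cos θ - cos β₁ sin θ) t = sin β₂ * t`. As `B + θ ∈ [0, π]`, applying the
decreasing function `arccos` yields `B + θ < arccos (sin β₂ * t)`.
-/

open Real

namespace Real

lemma sin_arccos_sin_mul_lt {β t : ℝ} (hβ : 0 < cos β) (ht : 1 < t) :
    sin (arccos (sin β * t)) < cos β * t := by
  rw [sin_arccos, sqrt_lt' (by positivity)]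
  have hsq : (sin β * t) ^ 2 + (cos β * t) ^ 2 = t ^ 2 := by
    rw [mul_pow, mul_pow, ← add_mul, sin_sq_add_cos_sq, one_mul]
  nlinarith

lemma sin_sub_mul_lt_cos_arccos_add {β θ t : ℝ} (hβ : 0 < cos β) (hθ : 0 < sin θ) (ht : 1 < t)
    (hx₁ : -1 ≤ sin β * t) (hx₂ : sin β * t ≤ 1) :
    sin (β - θ) * t < cos (arccos (sin β * t) + θ) := by
  have hsin := sin_arccos_sin_mul_lt hβ ht
  rw [cos_add, cos_arccos hx₁ hx₂, sin_sub]
  nlinarith [mul_lt_mul_of_pos_right hsin hθ]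

lemma lt_arccos_of_lt_cos {α y : ℝ} (hα₀ : 0 ≤ α) (hα₁ : α ≤ π) (hy : -1 ≤ y) (h : y < cos α) :
    α < arccos y := by
  rw [← arccos_cos hα₀ hα₁]
  exact arccos_lt_arccos hy h (cos_le_one α)

end Real

/-- Strict inequality `arccos(sin(β₁) t) + θ < arccos(sin(β₂) t)` for `1 < t ≤ 1/sin β₁`. -/
theorem stmt3 (β₁ β₂ : ℝ) (hβ₂ : 0 < β₂) (hβ : β₂ < β₁) (hβ₁ : β₁ < π / 2)
    (θ : ℝ) (hθ : θ = β₁ - β₂)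
    (t : ℝ) (ht1 : 1 < t) (ht2 : t ≤ 1 / Real.sin β₁) :
    Real.arccos (Real.sin β₁ * t) + θ < Real.arccos (Real.sin β₂ * t) := by
  have hsin₁ : 0 < sin β₁ := sin_pos_of_pos_of_lt_pi (by linarith) (by linarith [pi_pos])
  have hcos₁ : 0 < cos β₁ := cos_pos_of_mem_Ioo ⟨by linarith, hβ₁⟩
  have hsinθ : 0 < sin θ := sin_pos_of_pos_of_lt_pi (by linarith) (by linarith)
  have hy : 0 < sin β₂ * t :=
    mul_pos (sin_pos_of_pos_of_lt_pi hβ₂ (by linarith)) (by linarith)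
  have hx₁ : 0 < sin β₁ * t := by positivity
  have hx₂ : sin β₁ * t ≤ 1 := by rwa [le_div_iff₀' hsin₁] at ht2
  have hB : arccos (sin β₁ * t) < π / 2 := arccos_lt_pi_div_two.mpr hx₁
  have hβ₂_eq : β₂ = β₁ - θ := by linarith
  refine lt_arccos_of_lt_cos (by linarith [arccos_nonneg (sin β₁ * t)]) (by linarith)
    (by linarith) ?_
  rw [hβ₂_eq]
  exact sin_sub_mul_lt_cos_arccos_add hcos₁ hsinθ ht1 (by linarith) hx₂
end

section
/- Let 0 < β₂ < β₁ < π/2, θ = β₁ − β₂, and t ≥ 1. If φ ∈ ℝ satisfies |sin(φ + θ)| > sin(β₁)·t, then |sin(φ)| > sin(β₂)·t. -/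
/-! Since `|sin (φ + θ)| > sin β₁`, also `|cos (φ + θ)| < cos β₁`. Expanding
`sin φ = sin ((φ + θ) - θ)` then gives
`|sin φ| > t sin β₁ cos θ - cos β₁ sin θ ≥ t (sin β₁ cos θ - cos β₁ sin θ) = t sin β₂`,
the middle step using `t ≥ 1` and `cos β₁ sin θ ≥ 0`. -/

open Real

theorem abs_cos_lt_abs_cos_of_abs_sin_lt_abs_sin {x y : ℝ} (h : |sin y| < |sin x|) :
    |cos x| < |cos y| := by
  have hsq : cos x ^ 2 < cos y ^ 2 := by
    nlinarith [sin_sq_add_cos_sq x, sin_sq_add_cos_sq y, sq_lt_sq.mpr h]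
  exact sq_lt_sq.mp hsq

theorem abs_sin_mul_cos_sub_abs_cos_mul_sin_le_abs_sin_sub (x θ : ℝ) (hcθ : 0 ≤ cos θ)
    (hsθ : 0 ≤ sin θ) : |sin x| * cos θ - |cos x| * sin θ ≤ |sin (x - θ)| := by
  calc |sin x| * cos θ - |cos x| * sin θ = |sin x * cos θ| - |cos x * sin θ| := by
        rw [abs_mul, abs_mul, abs_of_nonneg hcθ, abs_of_nonneg hsθ]
    _ ≤ |sin x * cos θ - cos x * sin θ| := abs_sub_abs_le_abs_sub _ _
    _ = |sin (x - θ)| := by rw [sin_sub]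

theorem sin_sub_mul_lt_abs_sin_sub {β θ t x : ℝ} (hsβ : 0 ≤ sin β) (hcβ : 0 < cos β)
    (hsθ : 0 ≤ sin θ) (hcθ : 0 < cos θ) (ht : 1 ≤ t) (h : sin β * t < |sin x|) :
    sin (β - θ) * t < |sin (x - θ)| := by
  have hsin : |sin β| < |sin x| := by
    rw [abs_of_nonneg hsβ]; nlinarith
  have hcos : |cos x| < cos β := by
    simpa only [abs_of_pos hcβ] using abs_cos_lt_abs_cos_of_abs_sin_lt_abs_sin hsin
  calc sin (β - θ) * t = sin β * t * cos θ - cos β * sin θ - (t - 1) * (cos β * sin θ) := by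
        rw [sin_sub]; ring
    _ ≤ sin β * t * cos θ - cos β * sin θ := by
        have : 0 ≤ (t - 1) * (cos β * sin θ) := by
          have := sub_nonneg.mpr ht; positivity
        linarith
    _ < |sin x| * cos θ - |cos x| * sin θ := by
        linarith [mul_lt_mul_of_pos_right h hcθ, mul_le_mul_of_nonneg_right hcos.le hsθ]
    _ ≤ |sin (x - θ)| := abs_sin_mul_cos_sub_abs_cos_mul_sin_le_abs_sin_sub x θ hcθ.le hsθ

/-- If `|sin(φ + θ)| > sin(β₁) t` with `θ = β₁ - β₂` and `t ≥ 1`, then `|sin φ| > sin(β₂) t`. -/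
theorem stmt4 (β₁ β₂ : ℝ) (hβ₂ : 0 < β₂) (hβ : β₂ < β₁) (hβ₁ : β₁ < π / 2)
    (θ : ℝ) (hθ : θ = β₁ - β₂) (t : ℝ) (ht : 1 ≤ t) (φ : ℝ)
    (h : Real.sin β₁ * t < |Real.sin (φ + θ)|) :
    Real.sin β₂ * t < |Real.sin φ| := by
  subst hθ
  have hpi := pi_pos
  have key := sin_sub_mul_lt_abs_sin_sub (β := β₁) (θ := β₁ - β₂)
    (sin_nonneg_of_nonneg_of_le_pi (by linarith) (by linarith))
    (cos_pos_of_mem_Ioo ⟨by linarith, hβ₁⟩)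
    (sin_nonneg_of_nonneg_of_le_pi (by linarith) (by linarith))
    (cos_pos_of_mem_Ioo ⟨by linarith, by linarith⟩) ht h
  simpa only [sub_sub_cancel, add_sub_cancel_right] using key
end

section
/- Let 0 < s < 1, N ≥ 1, p ∈ ℝ^N, 0 < δ < 1/2, and let E ⊆ ℝ^N be measurable. Suppose F ⊆ ℝ^N is measurable with p.v. ∫_{ℝ^N} (χ_F(x) − χ_{F^c}(x))/|x|^{N+s} dx well defined. If F = { (y,z) ∈ ℝ^m × ℝ^n : |z + e₁| > 1 } with N = m+n and e₁ the first standard basis vector of ℝ^n, then p.v. ∫_{ℝ^N} (χ_F(x) − χ_{F^c}(x))/|x|^{N+s} dx ≥ ∫_{{x = (y,z) : |z₁| > 2}} |x|^{−(N+s)} dx > 0, where z₁ is the first coordinate of z. -/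
/-!
The reflection `z₁ ↦ -z₁` preserves `|x|` and Lebesgue measure, so each truncated integral of
`(χ_F - χ_{Fᶜ}) |x|^{-(N+s)}` equals the integral of the average of the integrand at `x` and at
its reflection. Where `|z₁| > 2` both points lie in `F` and the average is `|x|^{-(N+s)}`.
Where `z₁ ≠ 0` at least one of them lies in `F`, because `|z₁ + 1| ≤ 1` and `|1 - z₁| ≤ 1` force
`z₁ = 0`; so the average is nonnegative almost everywhere.
-/

open MeasureTheory Set Filter

section Symmetrization

variable {α : Type*}

noncomputable def signIndicator (F : Set α) (x : α) : ℝ :=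
  F.indicator (fun _ => 1) x - Fᶜ.indicator (fun _ => 1) x

lemma signIndicator_of_mem {F : Set α} {x : α} (hx : x ∈ F) : signIndicator F x = 1 := by
  simp [signIndicator, hx]

lemma signIndicator_mul (F : Set α) (w : α → ℝ) (x : α) :
    signIndicator F x * w x = F.indicator w x - Fᶜ.indicator w x := by
  by_cases hx : x ∈ F <;> simp [signIndicator, hx]

lemma neg_one_le_signIndicator (F : Set α) (x : α) : -1 ≤ signIndicator F x := by
  by_cases hx : x ∈ F <;> simp [signIndicator, hx]

variable [MeasurableSpace α] {μ : Measure α}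

lemma setIntegral_le_of_le_avg_comp {σ : α → α} (hσ : MeasurePreserving σ μ μ)
    (hσe : MeasurableEmbedding σ) {A : Set α} (hA : σ ⁻¹' A = A) {f g : α → ℝ}
    (hf : IntegrableOn f A μ) (hg : IntegrableOn g A μ)
    (hgf : ∀ᵐ x ∂μ.restrict A, g x ≤ (f x + f (σ x)) / 2) :
    ∫ x in A, g x ∂μ ≤ ∫ x in A, f x ∂μ := by
  have hfσ : IntegrableOn (fun x => f (σ x)) A μ := by
    have h := (hσ.integrableOn_comp_preimage hσe).2 hf
    rwa [hA] at h
  have hfσ_eq : ∫ x in A, f (σ x) ∂μ = ∫ x in A, f x ∂μ := by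
    simpa only [hA] using hσ.setIntegral_preimage_emb hσe f A
  calc ∫ x in A, g x ∂μ ≤ ∫ x in A, (f x + f (σ x)) / 2 ∂μ :=
        integral_mono_ae hg ((hf.add hfσ).div_const 2) hgf
    _ = ∫ x in A, f x ∂μ := by
        rw [integral_div, integral_add hf hfσ, hfσ_eq, add_self_div_two]

theorem setIntegral_le_setIntegral_signIndicator_mul {σ : α → α} (hσ : MeasurePreserving σ μ μ)
    (hσe : MeasurableEmbedding σ) {A S F : Set α} (hA : σ ⁻¹' A = A) (hSA : S ⊆ A)
    (hS : MeasurableSet S) (hF : MeasurableSet F) (hSF : ∀ x ∈ S, x ∈ F ∧ σ x ∈ F)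
    (hcover : ∀ᵐ x ∂μ, x ∈ F ∨ σ x ∈ F) {w : α → ℝ} (hw0 : ∀ x, 0 ≤ w x)
    (hwσ : ∀ x, w (σ x) = w x) (hw : IntegrableOn w A μ) :
    ∫ x in S, w x ∂μ ≤ ∫ x in A, signIndicator F x * w x ∂μ := by
  rw [← inter_eq_self_of_subset_right hSA, ← setIntegral_indicator hS]
  refine setIntegral_le_of_le_avg_comp hσ hσe hA ?_ (hw.indicator hS) ?_
  · simp only [signIndicator_mul]
    exact (hw.indicator hF).sub (hw.indicator hF.compl)
  filter_upwards [ae_restrict_of_ae hcover] with x hx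
  rw [hwσ, ← add_mul]
  by_cases hxS : x ∈ S
  · rw [indicator_of_mem hxS, signIndicator_of_mem (hSF x hxS).1,
      signIndicator_of_mem (hSF x hxS).2]
    linarith
  · have hsum : 0 ≤ signIndicator F x + signIndicator F (σ x) := by
      rcases hx with h | h
      · linarith [signIndicator_of_mem h, neg_one_le_signIndicator F (σ x)]
      · linarith [signIndicator_of_mem h, neg_one_le_signIndicator F x]
    rw [indicator_of_notMem hxS]
    have := hw0 x
    positivity

end Symmetrization

section NormPower

variable {E : Type*} [NormedAddCommGroup E] [NormedSpace ℝ E] [FiniteDimensional ℝ E]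
  [MeasurableSpace E] [BorelSpace E] {μ : Measure E} [μ.IsAddHaarMeasure]

lemma integrableOn_norm_rpow_neg {r δ : ℝ} (hr : (Module.finrank ℝ E : ℝ) < r) (hδ : 0 < δ) :
    IntegrableOn (fun x : E => ‖x‖ ^ (-r)) {x | δ ≤ ‖x‖} μ := by
  set c := δ / (1 + δ)
  refine ((integrable_one_add_norm hr).const_mul (c ^ (-r))).integrableOn.mono'
    (by fun_prop : Measurable fun x : E => ‖x‖ ^ (-r)).aestronglyMeasurable ?_
  refine (ae_restrict_iff' (measurableSet_le measurable_const measurable_norm)).2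
    (.of_forall fun x (hx : δ ≤ ‖x‖) => ?_)
  have hcx : c * (1 + ‖x‖) ≤ ‖x‖ := by
    rw [div_mul_eq_mul_div, div_le_iff₀ (by positivity)]
    nlinarith
  have hr0 : 0 ≤ r := (Nat.cast_nonneg _).trans hr.le
  rw [Real.norm_of_nonneg (by positivity), ← Real.mul_rpow (by positivity) (by positivity)]
  exact Real.rpow_le_rpow_of_nonpos (by positivity) hcx (by linarith)

end NormPower

namespace EuclideanSpace

variable {ι : Type*} [Fintype ι]

lemma abs_apply_le_norm (x : EuclideanSpace ℝ ι) (k : ι) : |x k| ≤ ‖x‖ :=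
  (Real.norm_eq_abs _).symm.trans_le (PiLp.norm_apply_le x k)

lemma ae_apply_ne_zero (k : ι) : ∀ᵐ x : EuclideanSpace ℝ ι, x k ≠ 0 := by
  classical
  have hker : LinearMap.ker (projₗ (𝕜 := ℝ) (ι := ι) k) ≠ ⊤ := fun h => by
    simpa using LinearMap.congr_fun (LinearMap.ker_eq_top.1 h) (single k 1)
  rw [ae_iff]
  convert Measure.addHaar_submodule volume _ hker using 2
  ext x
  simp

lemma setIntegral_norm_rpow_neg_pos (k : ι) {a r : ℝ} (ha : 0 < a)
    (hr : (Fintype.card ι : ℝ) < r) :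
    0 < ∫ x in {x : EuclideanSpace ℝ ι | a < |x k|}, ‖x‖ ^ (-r) := by
  classical
  have hopen : IsOpen {x : EuclideanSpace ℝ ι | a < |x k|} :=
    isOpen_lt continuous_const (continuous_abs.comp (proj k).continuous)
  have hsub : {x : EuclideanSpace ℝ ι | a < |x k|} ⊆ {x | a ≤ ‖x‖} := fun x hx =>
    (le_of_lt hx).trans (abs_apply_le_norm x k)
  have hint := (integrableOn_norm_rpow_neg (μ := volume) (by simpa using hr) ha).mono_set hsub
  rw [setIntegral_pos_iff_support_of_nonneg_ae (.of_forall fun x => by positivity) hint]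
  refine lt_of_lt_of_le (hopen.measure_pos volume ⟨single k (a + 1), ?_⟩) (measure_mono ?_)
  · simp [abs_of_pos (by linarith : 0 < a + 1)]
  · intro x hx
    have hx0 : 0 < ‖x‖ := ha.trans_le (hsub hx)
    exact ⟨(Real.rpow_pos_of_pos hx0 _).ne', hx⟩

variable [DecidableEq ι]

noncomputable def coordReflection (k : ι) : EuclideanSpace ℝ ι ≃ₗᵢ[ℝ] EuclideanSpace ℝ ι :=
  LinearIsometryEquiv.piLpCongrRight 2 fun i =>
    if i = k then LinearIsometryEquiv.neg ℝ else LinearIsometryEquiv.refl ℝ ℝ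

@[simp]
lemma coordReflection_apply_self (k : ι) (x : EuclideanSpace ℝ ι) :
    coordReflection k x k = -x k := by
  simp [coordReflection, LinearIsometryEquiv.piLpCongrRight_apply]

end EuclideanSpace

lemma abs_le_sqrt_sum_sq {ι : Type*} [Fintype ι] (v : ι → ℝ) (j : ι) :
    |v j| ≤ √(∑ i, v i ^ 2) :=
  Real.abs_le_sqrt (Finset.single_le_sum (f := fun i => v i ^ 2) (fun _ _ => sq_nonneg _)
    (Finset.mem_univ j))

section CylinderExterior

open EuclideanSpace

/-- `{(y, z) ∈ ℝᵐ × ℝⁿ | |z + e₁| > 1}`, where `z j = x (Fin.natAdd m j)` and `e₁` has index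
`⟨0, hn⟩`. -/
def cylinderExterior (m n : ℕ) (hn : 1 ≤ n) : Set (EuclideanSpace ℝ (Fin (m + n))) :=
  {x | 1 < √(∑ j : Fin n, (x (Fin.natAdd m j) + if j = ⟨0, hn⟩ then 1 else 0) ^ 2)}

variable {m n : ℕ} (hn : 1 ≤ n)

lemma measurableSet_cylinderExterior : MeasurableSet (cylinderExterior m n hn) :=
  measurableSet_lt measurable_const (by fun_prop)

lemma mem_cylinderExterior_of_one_lt_abs {x : EuclideanSpace ℝ (Fin (m + n))}
    (hx : 1 < |x (Fin.natAdd m ⟨0, hn⟩) + 1|) : x ∈ cylinderExterior m n hn :=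
  hx.trans_le <| by
    simpa using abs_le_sqrt_sum_sq
      (fun j : Fin n => x (Fin.natAdd m j) + if j = ⟨0, hn⟩ then 1 else 0) ⟨0, hn⟩

lemma mem_cylinderExterior_of_two_lt_abs {x : EuclideanSpace ℝ (Fin (m + n))}
    (hx : 2 < |x (Fin.natAdd m ⟨0, hn⟩)|) :
    x ∈ cylinderExterior m n hn ∧
      coordReflection (Fin.natAdd m ⟨0, hn⟩) x ∈ cylinderExterior m n hn := by
  constructor <;> apply mem_cylinderExterior_of_one_lt_abs <;>
    simp only [coordReflection_apply_self, lt_abs] <;>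
    rcases lt_abs.1 hx with h | h <;> first | (left; linarith) | (right; linarith)

lemma abs_add_one_le_of_notMem_cylinderExterior {x : EuclideanSpace ℝ (Fin (m + n))}
    (hx : x ∉ cylinderExterior m n hn) : |x (Fin.natAdd m ⟨0, hn⟩) + 1| ≤ 1 :=
  not_lt.1 (mt (mem_cylinderExterior_of_one_lt_abs hn) hx)

lemma mem_cylinderExterior_or_coordReflection_mem {x : EuclideanSpace ℝ (Fin (m + n))}
    (hx : x (Fin.natAdd m ⟨0, hn⟩) ≠ 0) :
    x ∈ cylinderExterior m n hn ∨
      coordReflection (Fin.natAdd m ⟨0, hn⟩) x ∈ cylinderExterior m n hn := by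
  by_contra! h
  have h₁ := abs_add_one_le_of_notMem_cylinderExterior hn h.1
  have h₂ := abs_add_one_le_of_notMem_cylinderExterior hn h.2
  rw [coordReflection_apply_self] at h₂
  rw [abs_le] at h₁ h₂
  exact hx (by linarith)

end CylinderExterior

theorem stmt19_general (m n : ℕ) (hn : 1 ≤ n) (s : ℝ) (hs0 : 0 < s)
    (F : Set (EuclideanSpace ℝ (Fin (m + n))))
    (hF : F = {x | 1 < Real.sqrt (∑ j : Fin n,
        (x (Fin.natAdd m j) + (if j = (⟨0, hn⟩ : Fin n) then 1 else 0)) ^ 2)})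
    (I : ℝ)
    (hpv : Tendsto (fun δ : ℝ =>
        ∫ x in {x : EuclideanSpace ℝ (Fin (m + n)) | δ ≤ ‖x‖},
          (F.indicator (fun _ => (1:ℝ)) x - Fᶜ.indicator (fun _ => (1:ℝ)) x)
            / ‖x‖ ^ ((m + n : ℝ) + s))
      (nhdsWithin 0 (Ioi 0)) (nhds I)) :
    (∫ x in {x : EuclideanSpace ℝ (Fin (m + n)) | 2 < |x (Fin.natAdd m ⟨0, hn⟩)|},
        ‖x‖ ^ (-((m + n : ℝ) + s))) ≤ I
    ∧ 0 < ∫ x in {x : EuclideanSpace ℝ (Fin (m + n)) | 2 < |x (Fin.natAdd m ⟨0, hn⟩)|},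
        ‖x‖ ^ (-((m + n : ℝ) + s)) := by
  change F = cylinderExterior m n hn at hF
  subst hF
  set k : Fin (m + n) := Fin.natAdd m ⟨0, hn⟩
  set r : ℝ := (m + n : ℝ) + s
  set σ := EuclideanSpace.coordReflection k
  have hr : ((m + n : ℕ) : ℝ) < r := by push_cast; linarith
  refine ⟨ge_of_tendsto hpv ?_,
    EuclideanSpace.setIntegral_norm_rpow_neg_pos k two_pos (by simpa using hr)⟩
  filter_upwards [Ioo_mem_nhdsGT two_pos] with δ ⟨hδ0, hδ2⟩
  have hS : {x : EuclideanSpace ℝ (Fin (m + n)) | 2 < |x k|} ⊆ {x | δ ≤ ‖x‖} := fun x hx =>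
    hδ2.le.trans (hx.le.trans (EuclideanSpace.abs_apply_le_norm x k))
  have h := setIntegral_le_setIntegral_signIndicator_mul σ.measurePreserving
    σ.toHomeomorph.measurableEmbedding (by ext; simp) hS
    (measurableSet_lt measurable_const (by fun_prop)) (measurableSet_cylinderExterior hn)
    (fun x hx => mem_cylinderExterior_of_two_lt_abs hn hx)
    ((EuclideanSpace.ae_apply_ne_zero k).mono
      fun x hx => mem_cylinderExterior_or_coordReflection_mem hn hx)
    (fun x => by positivity) (fun x => by simp) (integrableOn_norm_rpow_neg (by simpa using hr) hδ0)
  simpa only [signIndicator, Real.rpow_neg (norm_nonneg _), div_eq_mul_inv] using h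

/-- For the set `F = {(y,z) : |z + e₁| > 1}`, the principal value of
    `(χ_F - χ_{F^c})/|x|^{N+s}` at the origin is bounded below by the positive integral
    of `|x|^{-(N+s)}` over the region `{|z₁| > 2}`. -/
theorem stmt19 (m n : ℕ) (hm : 1 ≤ m) (hn : 1 ≤ n) (s : ℝ) (hs0 : 0 < s) (hs1 : s < 1)
    (F : Set (EuclideanSpace ℝ (Fin (m + n))))
    (hF : F = {x | 1 < Real.sqrt (∑ j : Fin n,
        (x (Fin.natAdd m j) + (if j = (⟨0, hn⟩ : Fin n) then 1 else 0)) ^ 2)})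
    (I : ℝ)
    (hpv : Tendsto (fun δ : ℝ =>
        ∫ x in {x : EuclideanSpace ℝ (Fin (m + n)) | δ ≤ ‖x‖},
          (F.indicator (fun _ => (1:ℝ)) x - Fᶜ.indicator (fun _ => (1:ℝ)) x)
            / ‖x‖ ^ ((m + n : ℝ) + s))
      (nhdsWithin 0 (Ioi 0)) (nhds I)) :
    (∫ x in {x : EuclideanSpace ℝ (Fin (m + n)) | 2 < |x (Fin.natAdd m ⟨0, hn⟩)|},
        ‖x‖ ^ (-((m + n : ℝ) + s))) ≤ I
    ∧ 0 < ∫ x in {x : EuclideanSpace ℝ (Fin (m + n)) | 2 < |x (Fin.natAdd m ⟨0, hn⟩)|},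
        ‖x‖ ^ (-((m + n : ℝ) + s)) :=
  stmt19_general m n hn s hs0 F hF I hpv
end
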